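/- arXiv:1808.00352 — 3 statements merged into one kernel-verified Lean document; each statement's English description precedes it below -/
import Mathlib

section
/- For every integer ℓ with 0 ≤ ℓ < g and any two vertices u and v of G having the same degree, the number of closed walks of length ℓ based at u equals the number of closed walks of length ℓ based at v. (Note that every closed walk of length ℓ < g is automatically cycle-free, since its traversed-edge subgraph has fewer than g edges and hence contains no cycle.) -/
/-!
Below the girth a closed walk only sees a tree around its base point, so the number of such
walks is governed by degrees alone. Let `N(v, F, m)` count the closed walks of length `m` at `v`
avoiding a set `F` of neighbours of `v`. Cutting such a walk at its first return to `v`, it is a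
step to some `x ∉ F`, a closed walk at `x` avoiding `v`, the step back to `v`, and a closed walk
at `v` avoiding `F`: the first return must come back through `x`, as otherwise it closes a cycle
shorter than the girth. In the resulting recursion only `deg v`, `|F|` and the degrees of the
neighbours of `v` enter. In a biregular bipartite graph the degree of a neighbour is determined by
`deg v`, so by strong induction on `m`, `N(v, F, m)` depends only on `deg v`, `|F|` and `m`.
-/

open Finset

theorem Finset.sum_eq_sum_of_card_eq_of_forall_eq {ι κ M : Type*} [AddCommMonoid M]
    {s : Finset ι} {t : Finset κ} {f : ι → M} {g : κ → M} (hst : #s = #t)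
    (hfg : ∀ i ∈ s, ∀ j ∈ t, f i = g j) : ∑ i ∈ s, f i = ∑ j ∈ t, g j := by
  obtain rfl | ⟨i, hi⟩ := s.eq_empty_or_nonempty
  · rw [card_empty, eq_comm, card_eq_zero] at hst
    simp [hst]
  obtain ⟨j, hj⟩ : t.Nonempty := card_pos.mp (hst ▸ card_pos.mpr ⟨i, hi⟩)
  calc ∑ i' ∈ s, f i' = ∑ _ ∈ s, g j := sum_congr rfl fun i' hi' => hfg i' hi' j hj
    _ = ∑ _ ∈ t, g j := by rw [sum_const, sum_const, hst]
    _ = ∑ j' ∈ t, g j' :=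
      sum_congr rfl fun j' hj' => (hfg i hi j hj).symm.trans (hfg i hi j' hj')

namespace SimpleGraph

variable {V : Type*} {G : SimpleGraph V}

theorem Walk.eq_of_length_add_two_lt_girth {v a b : V} (hva : G.Adj v a) (hvb : G.Adj v b)
    (w : G.Walk a b) (hv : v ∉ w.support) (hw : w.length + 2 < G.girth) : a = b := by
  classical
  by_contra hab
  have hvp : v ∉ w.bypass.support := fun h => hv (w.support_bypass_subset_support h)
  have hcyc : (Walk.cons hva (w.bypass.concat hvb.symm)).IsCycle := by
    refine (Walk.cons_isCycle_iff _ _).mpr ⟨w.bypass_isPath.concat hvp _, fun he => ?_⟩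
    rw [Walk.edges_concat, List.concat_eq_append, List.mem_append, List.mem_singleton,
      Sym2.eq_iff] at he
    rcases he with he | ⟨rfl, rfl⟩ | ⟨-, rfl⟩
    · exact hvp (w.bypass.fst_mem_support_of_mem_edges he)
    · exact hvb.ne rfl
    · exact hab rfl
  have := girth_le_length hcyc
  simp only [Walk.length_cons, Walk.length_concat] at this
  have := w.length_bypass_le_length
  omega

theorem Walk.notMem_support_of_length_add_two_lt_girth {v x y w : V} (hvx : G.Adj v x)
    (hvw : G.Adj v w) (hxw : x ≠ w) (p : G.Walk x y) (hv : v ∉ p.support)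
    (hp : p.length + 2 < G.girth) : w ∉ p.support := by
  classical
  intro hw
  refine hxw (eq_of_length_add_two_lt_girth hvx hvw (p.takeUntil w hw)
    (fun h => hv (p.support_takeUntil_subset_support hw h)) ?_)
  have := p.length_takeUntil_le_length hw
  omega

theorem Walk.exists_eq_append_cons_of_mem_support {x v w : V} (q : G.Walk x w)
    (hv : v ∈ q.support) (hx : x ≠ v) :
    ∃ (y : V) (r : G.Walk x y) (e : G.Adj y v) (t : G.Walk v w), v ∉ r.support ∧
      q = r.append (cons e t) := by
  induction q with
  | nil => exact absurd (by simpa using hv) hx.symm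
  | @cons x x' w h q ih =>
    by_cases hx' : x' = v
    · subst hx'
      exact ⟨x, nil, h, q, by simpa using hx.symm, rfl⟩
    · obtain ⟨y, r, e, t, hr, rfl⟩ := ih (by simpa [hx.symm] using hv) hx'
      exact ⟨y, cons h r, e, t, by simp [hx.symm, hr], rfl⟩

theorem Walk.append_cons_inj {y x v w : V} {r r' : G.Walk y x} {e : G.Adj x v}
    {t t' : G.Walk v w} (hr : v ∉ r.support) (hr' : v ∉ r'.support)
    (h : r.append (cons e t) = r'.append (cons e t')) : r = r' ∧ t = t' := by
  induction r with
  | nil =>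
    cases r' with
    | nil => simpa using h
    | cons h' r' =>
      simp only [nil_append, cons_append, cons.injEq] at h
      obtain ⟨rfl, -⟩ := h
      simp at hr'
  | cons h₁ r₁ ih =>
    cases r' with
    | nil =>
      simp only [nil_append, cons_append, cons.injEq] at h
      obtain ⟨rfl, -⟩ := h
      simp at hr
    | cons h' r' =>
      simp only [cons_append, cons.injEq] at h
      obtain ⟨rfl, h⟩ := h
      simp only [support_cons, List.mem_cons, not_or] at hr hr'
      obtain ⟨rfl, rfl⟩ := ih hr.2 hr'.2 (eq_of_heq h)
      exact ⟨rfl, rfl⟩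

def closedWalksAvoiding (G : SimpleGraph V) (v : V) (F : Finset V) (m : ℕ) : Set (G.Walk v v) :=
  {p | p.length = m ∧ ∀ w ∈ F, w ∉ p.support}

theorem closedWalksAvoiding_zero {v : V} {F : Finset V} (hF : ∀ w ∈ F, G.Adj v w) :
    G.closedWalksAvoiding v F 0 = {Walk.nil} := by
  ext p
  refine ⟨fun hp => Walk.eq_nil_iff_nil.mpr (Walk.length_eq_zero_iff.mp hp.1), ?_⟩
  rintro rfl
  exact ⟨rfl, fun w hw hwp => (hF w hw).ne' (by simpa using hwp)⟩

theorem closedWalksAvoiding_one (v : V) (F : Finset V) : G.closedWalksAvoiding v F 1 = ∅ := by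
  refine Set.eq_empty_of_forall_notMem fun p hp => ?_
  rcases p with _ | ⟨h, _ | _⟩ <;> simp [closedWalksAvoiding] at hp
  exact h.ne rfl

theorem cons_append_cons_mem_closedWalksAvoiding {v x : V} {F : Finset V}
    (hF : ∀ w ∈ F, G.Adj v w) (h : G.Adj v x) (hxF : x ∉ F) {mid : G.Walk x x}
    {tail : G.Walk v v} {i j : ℕ} (hmid : mid ∈ G.closedWalksAvoiding x {v} i)
    (htail : tail ∈ G.closedWalksAvoiding v F j) (hi : i + 2 < G.girth) :
    Walk.cons h (mid.append (Walk.cons h.symm tail)) ∈ G.closedWalksAvoiding v F (i + j + 2) := by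
  refine ⟨by simp [hmid.1, htail.1]; omega, fun w hw => ?_⟩
  have hvw : v ≠ w := (hF w hw).ne
  have hxw : x ≠ w := fun hxw => hxF (hxw ▸ hw)
  have hmidw : w ∉ mid.support := Walk.notMem_support_of_length_add_two_lt_girth h (hF w hw)
    hxw mid (hmid.2 v (mem_singleton_self v)) (hmid.1 ▸ hi)
  simp [hvw.symm, hxw.symm, hmidw, htail.2 w hw]

theorem exists_eq_cons_append_cons_of_mem_closedWalksAvoiding {v : V} {F : Finset V} {n : ℕ}
    {p : G.Walk v v} (hp : p ∈ G.closedWalksAvoiding v F (n + 2)) (hn : n + 2 < G.girth) :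
    ∃ (x : V) (h : G.Adj v x) (mid : G.Walk x x) (tail : G.Walk v v), x ∉ F ∧
      v ∉ mid.support ∧ (∀ w ∈ F, w ∉ tail.support) ∧ mid.length + tail.length = n ∧
      p = Walk.cons h (mid.append (Walk.cons h.symm tail)) := by
  obtain ⟨hlen, hpF⟩ := hp
  cases p with
  | nil => simp at hlen
  | @cons _ x _ h q =>
    obtain ⟨y, r, e, t, hr, rfl⟩ :=
      q.exists_eq_append_cons_of_mem_support q.end_mem_support h.ne'
    simp only [Walk.length_cons, Walk.length_append] at hlen
    obtain rfl : x = y := Walk.eq_of_length_add_two_lt_girth h e.symm r hr (by omega)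
    exact ⟨x, h, r, t, fun hx => hpF x hx (by simp), hr,
      fun w hw hwt => hpF w hw (by simp [hwt]), by omega, rfl⟩

variable [DecidableEq V]

instance [G.LocallyFinite] (v : V) (F : Finset V) (m : ℕ) :
    Finite (G.closedWalksAvoiding v F m) :=
  ((Set.toFinite {p : G.Walk v v | p.length = m}).subset fun _ hp => hp.1).to_subtype

theorem ncard_closedWalksAvoiding_add_two [G.LocallyFinite] {v : V} {F : Finset V}
    (hF : ∀ w ∈ F, G.Adj v w) {n : ℕ} (hn : n + 2 < G.girth) :
    (G.closedWalksAvoiding v F (n + 2)).ncard = ∑ x ∈ G.neighborFinset v \ F,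
      ∑ ij ∈ antidiagonal n,
        (G.closedWalksAvoiding x {v} ij.1).ncard * (G.closedWalksAvoiding v F ij.2).ncard := by
  let f : (Σ x : ↥(G.neighborFinset v \ F), Σ ij : ↥(antidiagonal n),
      G.closedWalksAvoiding x {v} ij.1.1 × G.closedWalksAvoiding v F ij.1.2) →
      G.closedWalksAvoiding v F (n + 2) := fun ⟨⟨x, hx⟩, ij, mid, tail⟩ =>
    have hx := mem_sdiff.mp hx
    have hij := mem_antidiagonal.mp ij.2
    ⟨_, hij ▸ cons_append_cons_mem_closedWalksAvoiding hF
      ((G.mem_neighborFinset v x).mp hx.1) hx.2 mid.2 tail.2 (by omega)⟩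
  have hf : Function.Bijective f := by
    constructor
    · rintro ⟨⟨x, _⟩, ⟨ij, _⟩, mid, tail⟩ ⟨⟨x', _⟩, ⟨ij', _⟩, mid', tail'⟩ h
      have heq := congrArg Subtype.val h
      simp only [f, Walk.cons.injEq] at heq
      obtain ⟨rfl, heq⟩ := heq
      obtain ⟨hmid, htail⟩ := Walk.append_cons_inj (mid.2.2 v (mem_singleton_self v))
        (mid'.2.2 v (mem_singleton_self v)) (eq_of_heq heq)
      obtain rfl : ij = ij' := Prod.ext (mid.2.1.symm.trans (hmid ▸ mid'.2.1))
        (tail.2.1.symm.trans (htail ▸ tail'.2.1))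
      obtain rfl := Subtype.ext hmid
      obtain rfl := Subtype.ext htail
      rfl
    · rintro ⟨p, hp⟩
      obtain ⟨x, h, mid, tail, hxF, hmid, htail, hlen, rfl⟩ :=
        exists_eq_cons_append_cons_of_mem_closedWalksAvoiding hp hn
      exact ⟨⟨⟨x, mem_sdiff.mpr ⟨(G.mem_neighborFinset v x).mpr h, hxF⟩⟩,
        ⟨(mid.length, tail.length), mem_antidiagonal.mpr hlen⟩,
        ⟨mid, rfl, by simpa using hmid⟩, ⟨tail, rfl, htail⟩⟩, rfl⟩
  rw [← Nat.card_coe_set_eq, ← Nat.card_congr (Equiv.ofBijective f hf), Nat.card_sigma,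
    ← sum_coe_sort (G.neighborFinset v \ F)]
  refine sum_congr rfl fun x _ => ?_
  rw [Nat.card_sigma, ← sum_coe_sort (antidiagonal n)]
  simp only [Nat.card_prod, Nat.card_coe_set_eq]

theorem card_neighborFinset_sdiff [G.LocallyFinite] {v : V} {F : Finset V}
    (hF : ∀ w ∈ F, G.Adj v w) : #(G.neighborFinset v \ F) = G.degree v - #F := by
  rw [card_sdiff_of_subset fun w hw => (G.mem_neighborFinset v w).mpr (hF w hw),
    card_neighborFinset_eq_degree]

theorem ncard_closedWalksAvoiding_eq_of_degree_eq [G.LocallyFinite]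
    (hdeg : ∀ ⦃a b a' b' : V⦄, G.Adj a b → G.Adj a' b' → G.degree a = G.degree a' →
      G.degree b = G.degree b')
    {m : ℕ} (hm : m < G.girth) {v v' : V} {F F' : Finset V} (hF : ∀ w ∈ F, G.Adj v w)
    (hF' : ∀ w ∈ F', G.Adj v' w) (hv : G.degree v = G.degree v') (hFF' : #F = #F') :
    (G.closedWalksAvoiding v F m).ncard = (G.closedWalksAvoiding v' F' m).ncard := by
  induction m using Nat.strong_induction_on generalizing v v' F F' with
  | _ m ih =>
  match m with
  | 0 => rw [closedWalksAvoiding_zero hF, closedWalksAvoiding_zero hF', Set.ncard_singleton,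
      Set.ncard_singleton]
  | 1 => rw [closedWalksAvoiding_one, closedWalksAvoiding_one, Set.ncard_empty, Set.ncard_empty]
  | n + 2 =>
    rw [ncard_closedWalksAvoiding_add_two hF hm, ncard_closedWalksAvoiding_add_two hF' hm]
    refine sum_eq_sum_of_card_eq_of_forall_eq (by rw [card_neighborFinset_sdiff hF,
      card_neighborFinset_sdiff hF', hv, hFF']) fun x hx x' hx' => sum_congr rfl fun ij hij => ?_
    have hvx := (G.mem_neighborFinset v x).mp (mem_sdiff.mp hx).1
    have hvx' := (G.mem_neighborFinset v' x').mp (mem_sdiff.mp hx').1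
    have hij := mem_antidiagonal.mp hij
    rw [ih ij.1 (by omega) (by omega) (v := x) (v' := x') (F := {v}) (F' := {v'})
      (by simpa using hvx.symm) (by simpa using hvx'.symm) (hdeg hvx hvx' hv) rfl,
      ih ij.2 (by omega) (by omega) hF hF' hv hFF']

end SimpleGraph

theorem closed_walk_count_eq_of_degree_eq_general {V : Type*} [Fintype V] [DecidableEq V]
    (G : SimpleGraph V) [DecidableRel G.Adj]
    (U : Set V) (c d : ℕ)
    (hbip : ∀ ⦃u v : V⦄, G.Adj u v → (u ∈ U ↔ v ∉ U))
    (hdegU : ∀ v ∈ U, G.degree v = c)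
    (hdegW : ∀ v ∉ U, G.degree v = d)
    (g : ℕ) (hg : G.girth = g)
    (ℓ : ℕ) (hℓ : ℓ < g) (u v : V) (hdeg : G.degree u = G.degree v) :
    {p : G.Walk u u | p.length = ℓ}.ncard = {p : G.Walk v v | p.length = ℓ}.ncard := by
  have hsum : ∀ ⦃a b : V⦄, G.Adj a b → G.degree a + G.degree b = c + d := by
    intro a b hab
    by_cases ha : a ∈ U
    · rw [hdegU a ha, hdegW b ((hbip hab).mp ha)]
    · rw [hdegW a ha, hdegU b (not_not.mp (mt (hbip hab).mpr ha)), add_comm]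
  have h := G.ncard_closedWalksAvoiding_eq_of_degree_eq
    (fun a b a' b' hab ha'b' hdeg' => by linarith [hsum hab, hsum ha'b']) (hg ▸ hℓ)
    (F := ∅) (F' := ∅) (by simp) (by simp) hdeg rfl
  simpa [SimpleGraph.closedWalksAvoiding] using h

/-- For `0 ≤ ℓ < g` and any two vertices `u, v` of the same degree, the
number of closed walks of length `ℓ` based at `u` equals the number of closed walks of
length `ℓ` based at `v`. -/
theorem closed_walk_count_eq_of_degree_eq {V : Type*} [Fintype V] [DecidableEq V]
    (G : SimpleGraph V) [DecidableRel G.Adj]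
    (U : Set V) (c d : ℕ) (hc : 2 ≤ c) (hd : 2 ≤ d)
    (hbip : ∀ ⦃u v : V⦄, G.Adj u v → (u ∈ U ↔ v ∉ U))
    (hdegU : ∀ v ∈ U, G.degree v = c)
    (hdegW : ∀ v ∉ U, G.degree v = d)
    (hcyc : ¬ G.IsAcyclic) (g : ℕ) (hg : G.girth = g)
    (ℓ : ℕ) (hℓ : ℓ < g) (u v : V) (hdeg : G.degree u = G.degree v) :
    {p : G.Walk u u | p.length = ℓ}.ncard = {p : G.Walk v v | p.length = ℓ}.ncard :=
  closed_walk_count_eq_of_degree_eq_general G U c d hbip hdegU hdegW g hg ℓ hℓ u v hdeg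
end

section
/- Let C be a cycle of G of length i (so i ≥ g), let v be a vertex of C belonging to U (hence of degree c), and let l ≥ 1 be an integer with i + 2l < 2g. Then the number of vertices z of G not lying on C such that there exists a path of length l from v to z using no edge of C equals (c−2)·(d−1)^{⌈(l−1)/2⌉}·(c−1)^{⌊(l−1)/2⌋}. -/
/-!
Since `i + 2l < 2g` and `g ≤ i`, we have `2l < g`, so two distinct paths of length at most `l`
with the same ends would close a cycle shorter than `g`: a vertex `z` of the set is reached by a
unique such path, and it suffices to count paths. A path from `v` of length `n ≥ 1` using no edge
of `C` cannot end on `C`, for together with the two arcs of `C` from `v` to its end it would give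
two cycles of total length at most `2n + i < 2g`. Hence at its last vertex `z` exactly one edge is
used and none belongs to `C`, and as `n + 1 < g` each of the other `deg z - 1` edges extends it to
a path. At `v` itself the two edges of `C` are excluded, giving `c - 2` paths of length one, and
along a path the degrees alternate between `d` and `c` by bipartiteness.
-/

theorem eq_mul_pow_mul_pow_of_alternating {a : ℕ → ℕ} {x y m : ℕ}
    (h : ∀ k, k + 1 < m → a (k + 2) = (if Even k then x else y) * a (k + 1)) :
    ∀ k < m, a (k + 1) = a 1 * x ^ ((k + 1) / 2) * y ^ (k / 2) := by
  intro k hk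
  induction k with
  | zero => simp
  | succ k ih =>
    rw [h k hk, ih (by omega)]
    rcases Nat.even_or_odd' k with ⟨j, rfl | rfl⟩
    · rw [if_pos (even_two_mul j), show (2 * j + 1 + 1) / 2 = j + 1 by omega,
        show (2 * j + 1) / 2 = j by omega, show 2 * j / 2 = j by omega, pow_succ]
      ring
    · rw [if_neg (Nat.not_even_iff_odd.mpr (odd_two_mul_add_one j)),
        show (2 * j + 1 + 1 + 1) / 2 = j + 1 by omega, show (2 * j + 1 + 1) / 2 = j + 1 by omega,
        show (2 * j + 1) / 2 = j by omega, pow_succ]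
      ring

namespace SimpleGraph

variable {V : Type*} {G : SimpleGraph V} {u v z z' : V}

namespace Walk

theorem IsPath.girth_le_length_add_length {p q : G.Walk u v} (hp : p.IsPath) (hq : q.IsPath)
    (hpq : p ≠ q) : G.girth ≤ p.length + q.length := by
  obtain ⟨_, _, _, c, hc, hle⟩ := hp.exists_isCycle_length_le_add_of_ne hq hpq
  exact (girth_le_length hc).trans hle

theorem IsPath.eq_of_length_add_length_lt_girth {p q : G.Walk u v} (hp : p.IsPath)
    (hq : q.IsPath) (h : p.length + q.length < G.girth) : p = q := by
  by_contra hpq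
  exact (hp.girth_le_length_add_length hq hpq).not_gt h

theorem IsPath.cons_of_length_lt_girth {w : G.Walk z v} (hw : w.IsPath)
    (hlen : w.length + 1 < G.girth) (h : G.Adj z' z) (he : s(z', z) ∉ w.edges) :
    (cons h w).IsPath := by
  classical
  refine (cons_isPath_iff h w).mpr ⟨hw, fun hz' => he ?_⟩
  have htake : w.takeUntil z' hz' = h.symm.toWalk :=
    (hw.takeUntil hz').eq_of_length_add_length_lt_girth h.symm.isPath_toWalk <| by
      have := w.length_takeUntil_le_length hz'
      simp only [Adj.toWalk, length_cons, length_nil]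
      omega
  simpa [htake, Sym2.eq_swap] using w.edges_takeUntil_subset_edges hz'

theorem IsCycle.notMem_support_of_edges_disjoint {C : G.Walk v v} (hC : C.IsCycle)
    {p : G.Walk z v} (hp : p.IsPath) (hp0 : p.length ≠ 0) (hpC : ∀ e ∈ p.edges, e ∉ C.edges)
    (hlen : 2 * p.length + C.length < 2 * G.girth) : z ∉ C.support := by
  classical
  intro hz
  have hzv : z ≠ v := by
    rintro rfl
    exact hp0 (length_eq_zero_iff.mpr (isPath_iff_nil.mp hp))
  have girth_le : ∀ q : G.Walk z v, q.IsPath → (∀ e ∈ q.edges, e ∈ C.edges) →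
      G.girth ≤ p.length + q.length := by
    intro q hq hqC
    refine hp.girth_le_length_add_length hq fun hpq => ?_
    obtain ⟨e, he⟩ := List.exists_mem_of_ne_nil p.edges (by simpa [← length_edges] using hp0)
    exact hpC e he (hqC e (hpq ▸ he))
  have htake := girth_le (C.takeUntil z hz).reverse (hC.isPath_takeUntil hz).reverse
    (by simpa using fun e he => C.edges_takeUntil_subset_edges hz he)
  have hdrop := girth_le (C.dropUntil z hz)
    (IsCycle.isPath_of_append_right (not_nil_of_ne hzv.symm) (by rwa [C.take_spec hz]))
    (fun e he => C.edges_dropUntil_subset_edges hz he)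
  have hsplit := congrArg length (C.take_spec hz)
  rw [length_append] at hsplit
  rw [length_reverse] at htake
  omega

theorem even_length_iff_mem_iff {U : Set V} (hU : ∀ ⦃x y⦄, G.Adj x y → (x ∈ U ↔ y ∉ U))
    (p : G.Walk u v) : Even p.length ↔ (u ∈ U ↔ v ∈ U) := by
  induction p with
  | nil => simp
  | cons h _ ih =>
    rw [length_cons, Nat.even_add_one, ih]
    have := hU h
    tauto

theorem exists_eq_cons_of_sigma_snd_tail_eq {p : G.Walk u v} (hp : ¬ p.Nil) {w : G.Walk z v}
    (h : (⟨p.snd, p.tail⟩ : Σ z, G.Walk z v) = ⟨z, w⟩) : ∃ h : G.Adj u z, p = cons h w := by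
  obtain ⟨rfl, hw⟩ := Sigma.mk.inj_iff.mp h
  obtain rfl := eq_of_heq hw
  exact ⟨p.adj_snd hp, (p.cons_tail_eq hp).symm⟩

theorem sigma_snd_tail_cons (h : G.Adj u z) (p : G.Walk z v) :
    (⟨(cons h p).snd, (cons h p).tail⟩ : Σ z, G.Walk z v) = ⟨z, p⟩ := by
  cases p <;> rfl

end Walk

theorem ncard_neighborSet_eq_degree (v : V) [Fintype (G.neighborSet v)] :
    (G.neighborSet v).ncard = G.degree v := by
  rw [← card_neighborSet_eq_degree, ← Nat.card_eq_fintype_card, Nat.card_coe_set_eq]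

section Counting

open Finset
open scoped Classical

/-- Paths are stored ending at `v`, so that a path is extended at its free end by `Walk.cons`. -/
noncomputable def pathsToAvoiding [Fintype V] (G : SimpleGraph V) (v : V) (H : G.Subgraph)
    (n : ℕ) : Finset (Σ z, G.Walk z v) :=
  {q ∈ univ.sigma fun z => G.finsetWalkLength n z v |
    q.2.IsPath ∧ ∀ e ∈ q.2.edges, e ∉ H.edgeSet}

variable [Fintype V] {H : G.Subgraph} {n : ℕ}

theorem mem_pathsToAvoiding {q : Σ z, G.Walk z v} :
    q ∈ G.pathsToAvoiding v H n ↔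
      q.2.IsPath ∧ q.2.length = n ∧ ∀ e ∈ q.2.edges, e ∉ H.edgeSet := by
  simp only [pathsToAvoiding, mem_filter, mem_sigma, mem_univ, mem_finsetWalkLength_iff, true_and]
  tauto

theorem pathsToAvoiding_zero : G.pathsToAvoiding v H 0 = {⟨v, Walk.nil⟩} := by
  ext ⟨z, q⟩
  rw [mem_pathsToAvoiding, mem_singleton]
  constructor
  · rintro ⟨-, hq, -⟩
    cases q with
    | nil => rfl
    | cons => simp at hq
  · rintro ⟨⟩
    simp

theorem cons_mem_pathsToAvoiding_succ_iff (hn : n + 1 < G.girth) {w : G.Walk z v}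
    (hw : ⟨z, w⟩ ∈ G.pathsToAvoiding v H n) (h : G.Adj z' z) :
    ⟨z', Walk.cons h w⟩ ∈ G.pathsToAvoiding v H (n + 1) ↔
      z' ∉ (w.toSubgraph ⊔ H).neighborSet z := by
  obtain ⟨hw, hwn, hwH⟩ := mem_pathsToAvoiding.mp hw
  simp only [mem_pathsToAvoiding, Walk.length_cons, hwn, Walk.edges_cons, List.mem_cons,
    forall_eq_or_imp, Subgraph.neighborSet_sup, Set.mem_union, Subgraph.mem_neighborSet,
    ← Subgraph.mem_edgeSet, Walk.mem_edges_toSubgraph, Sym2.eq_swap (a := z), not_or, true_and]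
  constructor
  · rintro ⟨hp, hH, -⟩
    exact ⟨fun he => ((Walk.cons_isPath_iff h w).mp hp).2 (w.fst_mem_support_of_mem_edges he), hH⟩
  · rintro ⟨he, hH⟩
    exact ⟨hw.cons_of_length_lt_girth (by omega) h he, hH, hwH⟩

theorem card_pathsToAvoiding_succ_filter_tail_eq (hn : n + 1 < G.girth) {r : Σ z, G.Walk z v}
    (hr : r ∈ G.pathsToAvoiding v H n) :
    #{q ∈ G.pathsToAvoiding v H (n + 1) | (⟨q.2.snd, q.2.tail⟩ : Σ z, G.Walk z v) = r} =
      (G.neighborSet r.1 \ (r.2.toSubgraph ⊔ H).neighborSet r.1).ncard := by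
  obtain ⟨z, w⟩ := r
  have hfiber : ∀ z' (q : G.Walk z' v),
      ⟨z', q⟩ ∈ {q ∈ G.pathsToAvoiding v H (n + 1) |
        (⟨q.2.snd, q.2.tail⟩ : Σ z, G.Walk z v) = ⟨z, w⟩} →
      ∃ h : G.Adj z' z, q = Walk.cons h w := by
    intro z' q hq
    obtain ⟨hq, hqw⟩ := mem_filter.mp hq
    refine q.exists_eq_cons_of_sigma_snd_tail_eq ?_ hqw
    simp [← Walk.length_eq_zero_iff, (mem_pathsToAvoiding.mp hq).2.1]
  rw [← Set.ncard_coe_finset]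
  refine Set.ncard_congr (fun q _ => q.1) ?_ ?_ ?_
  · rintro ⟨z', q⟩ hq
    obtain ⟨h, rfl⟩ := hfiber z' q hq
    exact ⟨h.symm, (cons_mem_pathsToAvoiding_succ_iff hn hr h).mp (mem_filter.mp hq).1⟩
  · rintro ⟨z₁, q₁⟩ ⟨z₂, q₂⟩ hq₁ hq₂ (rfl : z₁ = z₂)
    obtain ⟨_, rfl⟩ := hfiber z₁ q₁ hq₁
    obtain ⟨_, rfl⟩ := hfiber z₁ q₂ hq₂
    rfl
  · rintro z' ⟨hzz', hz'⟩
    refine ⟨⟨z', Walk.cons hzz'.symm w⟩, mem_filter.mpr ⟨?_, w.sigma_snd_tail_cons hzz'.symm⟩, rfl⟩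
    exact (cons_mem_pathsToAvoiding_succ_iff hn hr hzz'.symm).mpr hz'

theorem card_pathsToAvoiding_succ (hn : n + 1 < G.girth) :
    #(G.pathsToAvoiding v H (n + 1)) = ∑ r ∈ G.pathsToAvoiding v H n,
      ((G.neighborSet r.1).ncard - ((r.2.toSubgraph ⊔ H).neighborSet r.1).ncard) := by
  have htail : ∀ q ∈ G.pathsToAvoiding v H (n + 1),
      (⟨q.2.snd, q.2.tail⟩ : Σ z, G.Walk z v) ∈ G.pathsToAvoiding v H n := by
    intro q hq
    obtain ⟨hqp, hql, hqH⟩ := mem_pathsToAvoiding.mp hq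
    refine mem_pathsToAvoiding.mpr ⟨hqp.tail, by simp [hql], fun e he => hqH e ?_⟩
    rw [Walk.edges_tail] at he
    exact List.mem_of_mem_tail he
  rw [card_eq_sum_card_fiberwise htail]
  refine sum_congr rfl fun r hr => ?_
  rw [card_pathsToAvoiding_succ_filter_tail_eq hn hr,
    Set.ncard_sdiff (Subgraph.neighborSet_subset _ _) (Set.toFinite _)]

variable {C : G.Walk v v}

theorem card_pathsToAvoiding_one (hC : C.IsCycle) :
    #(G.pathsToAvoiding v C.toSubgraph 1) = (G.neighborSet v).ncard - 2 := by
  have hgirth : 1 < G.girth := by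
    have := three_le_girth fun hG => hG C hC
    omega
  rw [card_pathsToAvoiding_succ hgirth, pathsToAvoiding_zero, sum_singleton, Walk.toSubgraph,
    Subgraph.neighborSet_sup, neighborSet_singletonSubgraph, Set.empty_union,
    hC.ncard_neighborSet_toSubgraph_eq_two C.start_mem_support]

theorem card_pathsToAvoiding_succ_of_isCycle (hC : C.IsCycle) (hn : n ≠ 0)
    (hlen : 2 * (n + 1) + C.length < 2 * G.girth) :
    #(G.pathsToAvoiding v C.toSubgraph (n + 1)) =
      ∑ r ∈ G.pathsToAvoiding v C.toSubgraph n, ((G.neighborSet r.1).ncard - 1) := by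
  rw [card_pathsToAvoiding_succ (by omega)]
  refine sum_congr rfl fun ⟨z, w⟩ hr => ?_
  obtain ⟨hw, hwn, hwC⟩ := mem_pathsToAvoiding.mp hr
  have hz : z ∉ C.support := hC.notMem_support_of_edges_disjoint hw (hwn ▸ hn)
    (fun e he heC => hwC e he (C.mem_edges_toSubgraph.mpr heC)) (by omega)
  have hCz : C.toSubgraph.neighborSet z = ∅ :=
    Set.eq_empty_of_forall_notMem fun _ hy => hz (Walk.mem_support_of_adj_toSubgraph hy)
  rw [Subgraph.neighborSet_sup, hCz, Set.union_empty,
    hw.neighborSet_toSubgraph_startpoint (by simp [← Walk.length_eq_zero_iff, hwn, hn]),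
    Set.ncard_singleton]

theorem ncard_endpoints_eq_card_pathsToAvoiding {l : ℕ} (hC : C.IsCycle) (hl : l ≠ 0)
    (hlen : 2 * l + C.length < 2 * G.girth) :
    {z | z ∉ C.support ∧ ∃ p : G.Walk v z, p.IsPath ∧ p.length = l ∧
      ∀ e ∈ p.edges, e ∉ C.edges}.ncard = #(G.pathsToAvoiding v C.toSubgraph l) := by
  have hCg := G.girth_le_length hC
  have hS : {z | z ∉ C.support ∧ ∃ p : G.Walk v z, p.IsPath ∧ p.length = l ∧
      ∀ e ∈ p.edges, e ∉ C.edges} = (G.pathsToAvoiding v C.toSubgraph l).image Sigma.fst := by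
    ext z
    simp only [Set.mem_ofPred_eq, coe_image, Set.mem_image, mem_coe, mem_pathsToAvoiding,
      Walk.mem_edges_toSubgraph]
    constructor
    · rintro ⟨-, p, hp, hpl, hpC⟩
      exact ⟨⟨z, p.reverse⟩, ⟨hp.reverse, by simp [hpl], by simpa using hpC⟩, rfl⟩
    · rintro ⟨⟨z, q⟩, ⟨hq, hql, hqC⟩, rfl⟩
      exact ⟨hC.notMem_support_of_edges_disjoint hq (by omega) hqC (by omega), q.reverse,
        hq.reverse, by simp [hql], by simpa using hqC⟩
  rw [hS, Set.ncard_coe_finset, card_image_of_injOn]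
  rintro ⟨z, q⟩ hq ⟨z', q'⟩ hq' (rfl : z = z')
  obtain ⟨hq, hql, -⟩ := mem_pathsToAvoiding.mp hq
  obtain ⟨hq', hql', -⟩ := mem_pathsToAvoiding.mp hq'
  dsimp only at hq hql hq' hql'
  exact congrArg (Sigma.mk z) (hq.eq_of_length_add_length_lt_girth hq' (by omega))

theorem card_pathsToAvoiding_add_two {U : Set V} {c d k : ℕ}
    (hU : ∀ ⦃x y⦄, G.Adj x y → (x ∈ U ↔ y ∉ U)) (hdegU : ∀ z ∈ U, (G.neighborSet z).ncard = c)
    (hdegW : ∀ z ∉ U, (G.neighborSet z).ncard = d) (hv : v ∈ U) (hC : C.IsCycle)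
    (hlen : 2 * (k + 2) + C.length < 2 * G.girth) :
    #(G.pathsToAvoiding v C.toSubgraph (k + 2)) =
      (if Even k then d - 1 else c - 1) * #(G.pathsToAvoiding v C.toSubgraph (k + 1)) := by
  rw [card_pathsToAvoiding_succ_of_isCycle hC k.succ_ne_zero hlen, mul_comm, ← smul_eq_mul,
    ← sum_const]
  refine sum_congr rfl fun ⟨z, q⟩ hq => ?_
  have hzU : z ∈ U ↔ ¬ Even k := by
    rw [← Nat.even_add_one, ← (mem_pathsToAvoiding.mp hq).2.1, q.even_length_iff_mem_iff hU]
    tauto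
  by_cases hz : z ∈ U
  · rw [if_neg (hzU.mp hz), hdegU z hz]
  · rw [if_pos (not_not.mp (hz ∘ hzU.mpr)), hdegW z hz]

end Counting

end SimpleGraph

theorem card_vertices_at_path_distance_general {V : Type*} [Fintype V]
    (G : SimpleGraph V) [DecidableRel G.Adj]
    (U : Set V) (c d : ℕ)
    (hbip : ∀ ⦃u v : V⦄, G.Adj u v → (u ∈ U ↔ v ∉ U))
    (hdegU : ∀ v ∈ U, G.degree v = c)
    (hdegW : ∀ v ∉ U, G.degree v = d)
    (g : ℕ) (hg : G.girth = g)
    (i l : ℕ) (v : V) (hv : v ∈ U)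
    (C : G.Walk v v) (hC : C.IsCycle) (hCi : C.length = i)
    (hl : 1 ≤ l) (hil : i + 2 * l < 2 * g) :
    {z : V | z ∉ C.support ∧ ∃ p : G.Walk v z, p.IsPath ∧ p.length = l ∧
        ∀ e ∈ p.edges, e ∉ C.edges}.ncard
      = (c - 2) * (d - 1) ^ ((l - 1 + 1) / 2) * (c - 1) ^ ((l - 1) / 2) := by
  have hdegU' : ∀ z ∈ U, (G.neighborSet z).ncard = c := fun z hz =>
    (SimpleGraph.ncard_neighborSet_eq_degree z).trans (hdegU z hz)
  have hdegW' : ∀ z ∉ U, (G.neighborSet z).ncard = d := fun z hz =>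
    (SimpleGraph.ncard_neighborSet_eq_degree z).trans (hdegW z hz)
  subst hg hCi
  obtain ⟨k, rfl⟩ : ∃ k, l = k + 1 := ⟨l - 1, by omega⟩
  rw [SimpleGraph.ncard_endpoints_eq_card_pathsToAvoiding hC k.succ_ne_zero (by omega),
    Nat.add_sub_cancel, eq_mul_pow_mul_pow_of_alternating
      (a := fun n => (G.pathsToAvoiding v C.toSubgraph n).card) (m := k + 1)
      (fun j hj => SimpleGraph.card_pathsToAvoiding_add_two hbip hdegU' hdegW' hv hC (by omega))
      k (by omega),
    SimpleGraph.card_pathsToAvoiding_one hC, hdegU' v hv]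

/-- Let `C` be a cycle of length `i`, `v` a vertex of `C` lying in `U`
(hence of degree `c`), and `l ≥ 1` with `i + 2l < 2g`. The number of vertices `z` off
`C` joined to `v` by a path of length `l` using no edge of `C` is
`(c−2)·(d−1)^⌈(l−1)/2⌉·(c−1)^⌊(l−1)/2⌋`. -/
theorem card_vertices_at_path_distance {V : Type*} [Fintype V] [DecidableEq V]
    (G : SimpleGraph V) [DecidableRel G.Adj]
    (U : Set V) (c d : ℕ) (hc : 2 ≤ c) (hd : 2 ≤ d)
    (hbip : ∀ ⦃u v : V⦄, G.Adj u v → (u ∈ U ↔ v ∉ U))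
    (hdegU : ∀ v ∈ U, G.degree v = c)
    (hdegW : ∀ v ∉ U, G.degree v = d)
    (hcyc : ¬ G.IsAcyclic) (g : ℕ) (hg : G.girth = g)
    (i l : ℕ) (v : V) (hv : v ∈ U)
    (C : G.Walk v v) (hC : C.IsCycle) (hCi : C.length = i)
    (hl : 1 ≤ l) (hil : i + 2 * l < 2 * g) :
    {z : V | z ∉ C.support ∧ ∃ p : G.Walk v z, p.IsPath ∧ p.length = l ∧
        ∀ e ∈ p.edges, e ∉ C.edges}.ncard
      = (c - 2) * (d - 1) ^ ((l - 1 + 1) / 2) * (c - 1) ^ ((l - 1) / 2) :=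
  card_vertices_at_path_distance_general G U c d hbip hdegU hdegW g hg i l v hv C hC hCi hl hil
end

section
/- The number of closed walks of length g+2 in G that are not cycles, whose traversed-edge subgraph contains a cycle of length g, and whose base vertex does not lie on that cycle, equals g·N_g·(c+d−4). -/
/-!
A closed walk counted on the left runs `v → x`, around a `g`-cycle `b` based at `x`, and back
`x → v`, where `v` is a neighbour of `x` off `b`: the `g` edges of the walk not at `v` must be
exactly the edges of the `g`-cycle it covers, and a parity argument shows that they close up at
`x`. As `b` is a shortest cycle, `x` has no neighbours on `b` besides its two cycle neighbours,
which leaves `deg x - 2` choices of `v`. Summing over the `2 g N_g` based `g`-cycles, moving the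
base point one step along the cycle permutes them and alternates between `U` and `W`, so the sum
pairs up into `g N_g (c + d - 4)`.
-/

open Finset

namespace Finset

theorem two_nsmul_sum_eq_card_nsmul {α M : Type*} [AddCommMonoid M] {s : Finset α}
    (σ : α → α) (hmaps : Set.MapsTo σ s s) (hinj : Set.InjOn σ s) (f : α → M) {K : M}
    (hK : ∀ a ∈ s, f (σ a) + f a = K) : 2 • ∑ a ∈ s, f a = #s • K := by
  have hσ : ∑ a ∈ s, f (σ a) = ∑ a ∈ s, f a :=
    sum_nbij σ hmaps hinj (surjOn_of_injOn_of_card_le σ hmaps hinj le_rfl) fun _ _ => rfl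
  rw [two_nsmul]
  nth_rw 1 [← hσ]
  rw [← sum_add_distrib, sum_congr rfl hK, sum_const]

end Finset

namespace SimpleGraph

variable {V : Type*} {G : SimpleGraph V}

namespace Walk

theorem isCycle_concat_iff {x y : V} (h : G.Adj x y) (r : G.Walk y x) :
    (r.concat h).IsCycle ↔ (cons h r).IsCycle := by
  rw [← isCycle_reverse, reverse_concat, cons_isCycle_iff, cons_isCycle_iff, isPath_reverse_iff,
    edges_reverse, List.mem_reverse, Sym2.eq_swap]

theorem exists_eq_cons_concat {u v : V} (p : G.Walk u v) (hp : 2 ≤ p.length) :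
    ∃ (y z : V) (h₁ : G.Adj u y) (h₂ : G.Adj z v) (m : G.Walk y z),
      p = cons h₁ (m.concat h₂) ∧ m.length + 2 = p.length := by
  rcases p with _ | ⟨h₁, _ | ⟨h, r⟩⟩
  · simp at hp
  · simp at hp
  · obtain ⟨z, m, h₂, hr⟩ := exists_cons_eq_concat h r
    refine ⟨_, z, h₁, h₂, m, by rw [hr], ?_⟩
    have := congrArg length hr
    simp only [length_cons, length_concat] at this ⊢
    omega

theorem sigma_eq_of_cons_concat_eq {u x x' w : V} {h₁ : G.Adj u x} {h₂ : G.Adj x w}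
    {h₁' : G.Adj u x'} {h₂' : G.Adj x' w} {q : G.Walk x x} {q' : G.Walk x' x'}
    (he : cons h₁ (q.concat h₂) = cons h₁' (q'.concat h₂')) :
    (⟨x, q⟩ : Σ x, G.Walk x x) = ⟨x', q'⟩ := by
  obtain ⟨rfl, he⟩ := cons.inj he
  obtain ⟨-, rfl⟩ := concat_inj (eq_of_heq he)
  rfl

theorem not_isCycle_cons_concat {v x : V} (h : G.Adj v x) {q : G.Walk x x} (hq : ¬ q.Nil) :
    ¬ (cons h (q.concat h.symm)).IsCycle := by
  rw [cons_isCycle_iff, concat_isPath_iff, isPath_iff_nil]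
  exact fun h => hq h.1.1

theorem mem_tail_support_iff {u w : V} {p : G.Walk u u} (hp : ¬ p.Nil) :
    w ∈ p.support.tail ↔ w ∈ p.support := by
  refine ⟨List.mem_of_mem_tail, fun hw => ?_⟩
  rw [← cons_tail_support, List.mem_cons] at hw
  rcases hw with rfl | hw
  exacts [end_mem_tail_support hp, hw]

theorem eq_of_edges_perm_of_isTrail [DecidableEq V] {x y u : V} {m : G.Walk x y} {q : G.Walk u u}
    (hq : q.IsTrail) (h : m.edges.Perm q.edges) : x = y := by
  have hm : m.IsTrail := ⟨h.nodup_iff.mpr hq.edges_nodup⟩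
  by_contra hxy
  have hq_even : Even (q.edges.countP (x ∈ ·)) :=
    (hq.even_countP_edges_iff x).mpr fun h => absurd rfl h
  rw [← h.countP_eq, hm.even_countP_edges_iff x] at hq_even
  exact (hq_even hxy).1 rfl

theorem isCycle_of_edges_perm {x u : V} {m : G.Walk x x} {q : G.Walk u u} (hq : q.IsCycle)
    (h : m.edges.Perm q.edges) : m.IsCycle := by
  have hlen : m.length = q.length := by rw [← length_edges, ← length_edges, h.length_eq]
  have hm : ¬ m.Nil := by
    rw [← length_eq_zero_iff]; have := hq.three_le_length; omega
  have hsupp : ∀ w, w ∈ q.support.tail → w ∈ m.support.tail := fun w hw => by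
    rw [mem_tail_support_iff hm, mem_support_iff_exists_mem_edges_of_not_nil hm]
    rw [mem_tail_support_iff hq.not_nil,
      mem_support_iff_exists_mem_edges_of_not_nil hq.not_nil] at hw
    simpa only [h.mem_iff] using hw
  have htail : q.support.tail.Perm m.support.tail :=
    (List.subperm_of_subset hq.support_nodup hsupp).perm_of_length_le (by simp [hlen])
  refine isCycle_def _ |>.mpr ⟨⟨h.nodup_iff.mpr hq.edges_nodup⟩, ?_,
    htail.nodup_iff.mp hq.support_nodup⟩
  rintro rfl
  exact hm Nil.nil

theorem exists_eq_cons_concat_of_edges_subset {u v : V} {q : G.Walk u u} {w : G.Walk v v}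
    (hq : q.IsCycle) (hlen : w.length = q.length + 2) (hsub : ∀ e ∈ q.edges, e ∈ w.edges)
    (hv : v ∉ q.support) : ∃ (x : V) (h : G.Adj v x) (m : G.Walk x x),
      m.IsCycle ∧ m.length = q.length ∧ v ∉ m.support ∧ w = cons h (m.concat h.symm) := by
  classical
  obtain ⟨x, y, h₁, h₂, m, rfl, -⟩ := w.exists_eq_cons_concat (by omega)
  have hmq : m.length = q.length := by simp only [length_cons, length_concat] at hlen; omega
  have hqm : ∀ e ∈ q.edges, e ∈ m.edges := fun e he => by
    have hew := hsub e he
    rw [edges_cons, edges_concat, List.concat_eq_append, List.mem_cons, List.mem_append,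
      List.mem_singleton] at hew
    rcases hew with rfl | hem | rfl
    · exact absurd (q.fst_mem_support_of_mem_edges he) hv
    · exact hem
    · exact absurd (q.snd_mem_support_of_mem_edges he) hv
  have hperm : m.edges.Perm q.edges :=
    ((List.subperm_of_subset hq.edges_nodup hqm).perm_of_length_le
      (by simp only [length_edges, hmq]; rfl)).symm
  obtain rfl := eq_of_edges_perm_of_isTrail hq.isTrail hperm
  have hm := isCycle_of_edges_perm hq hperm
  refine ⟨x, h₁, m, hm, hmq, fun hvm => hv ?_, rfl⟩
  rw [mem_support_iff_exists_mem_edges_of_not_nil hm.not_nil] at hvm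
  obtain ⟨e, he, hve⟩ := hvm
  exact (mem_support_iff_exists_mem_edges_of_not_nil hq.not_nil).mpr ⟨e, hperm.subset he, hve⟩

theorem eq_or_eq_of_adj_of_mem_support [DecidableEq V] {x y z v : V} {m : G.Walk y z}
    (hm : m.IsPath) (hx : x ∉ m.support) (h₂ : G.Adj z x) (hg : m.length + 2 ≤ G.girth)
    (hv : G.Adj x v) (hvm : v ∈ m.support) : v = y ∨ v = z := by
  by_contra! hne
  set d := m.dropUntil v hvm
  have hxd : x ∉ d.support := fun h => hx (m.support_dropUntil_subset_support hvm h)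
  have hcyc : (Walk.cons hv (d.concat h₂)).IsCycle := by
    refine (cons_isCycle_iff _ hv).mpr ⟨(hm.dropUntil hvm).concat hxd h₂, ?_⟩
    rw [edges_concat, List.concat_eq_append, List.mem_append, List.mem_singleton, Sym2.eq_iff]
    rintro (he | ⟨rfl, -⟩ | ⟨-, rfl⟩)
    · exact hxd (d.fst_mem_support_of_mem_edges he)
    · exact hx m.end_mem_support
    · exact hne.2 rfl
  have hd := G.girth_le_length hcyc
  have hsplit : (m.takeUntil v hvm).length + d.length = m.length := by
    rw [← length_append, take_spec]
  simp only [length_cons, length_concat] at hd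
  exact hne.1 (eq_of_length_eq_zero (by omega : (m.takeUntil v hvm).length = 0)).symm

theorem IsCycle.card_filter_notMem_support_add_two [DecidableEq V] {x : V}
    [Fintype (G.neighborSet x)] {q : G.Walk x x} (hq : q.IsCycle) (hg : q.length = G.girth) :
    #{v ∈ G.neighborFinset x | v ∉ q.support} + 2 = G.degree x := by
  obtain ⟨y, z, h₁, h₂, m, rfl, hlen⟩ :=
    q.exists_eq_cons_concat (by have := hq.three_le_length; omega)
  obtain ⟨hpath, hxy⟩ := (cons_isCycle_iff _ h₁).mp hq
  obtain ⟨hm, hxm⟩ := (concat_isPath_iff h₂).mp hpath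
  have hyz : y ≠ z := by
    rintro rfl
    rw [isPath_iff_nil] at hm
    rw [hm.eq_nil] at hxy
    simp [Sym2.eq_swap] at hxy
  have hfilter : {v ∈ G.neighborFinset x | v ∉ (Walk.cons h₁ (m.concat h₂)).support}
      = G.neighborFinset x \ {y, z} := by
    ext v
    simp only [mem_filter, mem_neighborFinset, mem_sdiff, mem_insert, mem_singleton,
      support_cons, support_concat, List.mem_cons, List.mem_append, List.not_mem_nil, or_false]
    refine and_congr_right fun hv => ⟨?_, ?_⟩
    · rintro hvq (rfl | rfl)
      exacts [hvq (.inr (.inl m.start_mem_support)), hvq (.inr (.inl m.end_mem_support))]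
    · rintro hvyz (rfl | hvm | rfl)
      · exact hv.ne rfl
      · exact hvyz (eq_or_eq_of_adj_of_mem_support hm hxm h₂ (by omega) hv hvm)
      · exact hv.ne rfl
  have hsub : {y, z} ⊆ G.neighborFinset x := by
    simp [insert_subset_iff, h₁, h₂.symm]
  rw [hfilter, ← card_pair hyz, card_sdiff_add_card_eq_card hsub, card_neighborFinset_eq_degree]

end Walk

open Walk

def shiftBase : (Σ x : V, G.Walk x x) → Σ x : V, G.Walk x x
  | ⟨x, nil⟩ => ⟨x, nil⟩
  | ⟨_, Walk.cons h r⟩ => ⟨_, r.concat h⟩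

theorem shiftBase_injective : Function.Injective (shiftBase (G := G)) := by
  rintro ⟨x, _ | ⟨h, r⟩⟩ ⟨x', _ | ⟨h', r'⟩⟩ he <;> simp only [shiftBase] at he
  · exact he
  · obtain ⟨rfl, he⟩ := Sigma.mk.inj he
    exact absurd (eq_of_heq he).symm (concat_ne_nil _ _)
  · obtain ⟨rfl, he⟩ := Sigma.mk.inj he
    exact absurd (eq_of_heq he) (concat_ne_nil _ _)
  · obtain ⟨rfl, he⟩ := Sigma.mk.inj he
    obtain ⟨rfl, rfl⟩ := concat_inj (eq_of_heq he)
    rfl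

theorem length_shiftBase (p : Σ x : V, G.Walk x x) : (shiftBase p).2.length = p.2.length := by
  rcases p with ⟨x, _ | ⟨h, r⟩⟩ <;> simp [shiftBase]

theorem isCycle_shiftBase_iff {p : Σ x : V, G.Walk x x} :
    (shiftBase p).2.IsCycle ↔ p.2.IsCycle := by
  rcases p with ⟨x, _ | ⟨h, r⟩⟩
  · rfl
  · exact isCycle_concat_iff h r

theorem adj_shiftBase {p : Σ x : V, G.Walk x x} (hp : ¬ p.2.Nil) : G.Adj p.1 (shiftBase p).1 := by
  rcases p with ⟨x, _ | ⟨h, r⟩⟩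
  · exact absurd Nil.nil hp
  · exact h

theorem finite_setOf_isCycle_length_eq [Finite V] [G.LocallyFinite] (n : ℕ) :
    {p : Σ v : V, G.Walk v v | p.2.IsCycle ∧ p.2.length = n}.Finite := by
  classical
  exact (Set.finite_range fun p : Σ v : V, {q : G.Walk v v | q.length = n} =>
    (⟨p.1, p.2.1⟩ : Σ v : V, G.Walk v v)).subset fun p hp => ⟨⟨p.1, p.2, hp.2⟩, rfl⟩

theorem ncard_setOf_closedWalk_covering_cycle [Fintype V] [DecidableEq V] [DecidableRel G.Adj]
    (g : ℕ) :
    {p : Σ v : V, G.Walk v v | p.2.length = g + 2 ∧ ¬ p.2.IsCycle ∧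
        ∃ (u : V) (q : G.Walk u u), q.IsCycle ∧ q.length = g ∧
          (∀ e ∈ q.edges, e ∈ p.2.edges) ∧ p.1 ∉ q.support}.ncard
      = ∑ b ∈ (G.finite_setOf_isCycle_length_eq g).toFinset,
          #{v ∈ G.neighborFinset b.1 | v ∉ b.2.support} := by
  rw [← card_sigma, ← Set.ncard_coe_finset]
  symm
  have hmem : ∀ {t : Σ _ : Σ v : V, G.Walk v v, V},
      t ∈ (G.finite_setOf_isCycle_length_eq g).toFinset.sigma
        (fun b => {v ∈ G.neighborFinset b.1 | v ∉ b.2.support}) ↔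
      (t.1.2.IsCycle ∧ t.1.2.length = g) ∧ G.Adj t.1.1 t.2 ∧ t.2 ∉ t.1.2.support := by
    simp
  refine Set.ncard_congr (fun t ht => ⟨t.2, Walk.cons (hmem.mp ht).2.1.symm
    (t.1.2.concat (hmem.mp ht).2.1)⟩) ?_ ?_ ?_
  · rintro ⟨⟨x, q⟩, v⟩ ht
    obtain ⟨⟨hq, hlen⟩, hv, hvq⟩ := hmem.mp ht
    refine ⟨by simp [hlen], not_isCycle_cons_concat _ hq.not_nil, x, q, hq, hlen, ?_, hvq⟩
    intro e he
    simp [he]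
  · rintro ⟨b, v⟩ ⟨b', v'⟩ _ _ he
    obtain ⟨rfl, he⟩ := Sigma.mk.inj he
    exact congrArg (fun b => (⟨b, v⟩ : Σ _ : Σ v : V, G.Walk v v, V))
      (sigma_eq_of_cons_concat_eq (eq_of_heq he))
  · rintro ⟨v, w⟩ ⟨hlen, -, u, q, hq, rfl, hsub, hvq⟩
    dsimp only at hlen hsub hvq
    obtain ⟨x, h, m, hm, hml, hvm, rfl⟩ :=
      exists_eq_cons_concat_of_edges_subset hq hlen hsub hvq
    exact ⟨⟨⟨x, m⟩, v⟩, hmem.mpr ⟨⟨hm, hml⟩, h.symm, hvm⟩, rfl⟩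

end SimpleGraph

open SimpleGraph

theorem lambda_g_two_general {V : Type*} [Fintype V]
    (G : SimpleGraph V) [DecidableRel G.Adj]
    (U : Set V) (c d : ℕ)
    (hbip : ∀ ⦃u v : V⦄, G.Adj u v → (u ∈ U ↔ v ∉ U))
    (hdegU : ∀ v ∈ U, G.degree v = c)
    (hdegW : ∀ v ∉ U, G.degree v = d)
    (g : ℕ) (hg : G.girth = g)
    (N : ℕ → ℕ)
    (hN : ∀ j, {p : Σ v : V, G.Walk v v | p.2.IsCycle ∧ p.2.length = j}.ncard
      = 2 * j * N j) :
    {p : Σ v : V, G.Walk v v | p.2.length = g + 2 ∧ ¬ p.2.IsCycle ∧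
        ∃ (u : V) (q : G.Walk u u), q.IsCycle ∧ q.length = g ∧
          (∀ e ∈ q.edges, e ∈ p.2.edges) ∧ p.1 ∉ q.support}.ncard
      = g * N g * (c + d - 4) := by
  classical
  set B := (G.finite_setOf_isCycle_length_eq g).toFinset
  have hmemB {b} : b ∈ B ↔ b.2.IsCycle ∧ b.2.length = g := Set.Finite.mem_toFinset _
  set k : (Σ v : V, G.Walk v v) → ℕ :=
    fun b => #{v ∈ G.neighborFinset b.1 | v ∉ b.2.support}
  have hdeg : ∀ b ∈ B, k b + 2 = G.degree b.1 :=
    fun b hb => (hmemB.mp hb).1.card_filter_notMem_support_add_two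
      ((hmemB.mp hb).2.trans hg.symm)
  have hshift : Set.MapsTo shiftBase (B : Set (Σ v : V, G.Walk v v)) B := fun b hb => by
    rw [mem_coe, hmemB] at hb ⊢
    exact ⟨isCycle_shiftBase_iff.mpr hb.1, (length_shiftBase b).trans hb.2⟩
  have hpair : ∀ b ∈ B, k (shiftBase b) + k b = c + d - 4 := fun b hb => by
    have hadj := adj_shiftBase (hmemB.mp hb).1.not_nil
    have hb' := hdeg _ (hshift hb)
    have hb := hdeg b hb
    by_cases hU : b.1 ∈ U
    · rw [hdegU _ hU] at hb
      rw [hdegW _ ((hbip hadj).mp hU)] at hb'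
      omega
    · rw [hdegW _ hU] at hb
      rw [hdegU _ (not_not.mp (mt (hbip hadj).mpr hU))] at hb'
      omega
  have hsum := two_nsmul_sum_eq_card_nsmul shiftBase hshift shiftBase_injective.injOn k hpair
  rw [smul_eq_mul, smul_eq_mul,
    ← Set.ncard_eq_toFinset_card _ (G.finite_setOf_isCycle_length_eq g), hN] at hsum
  rw [ncard_setOf_closedWalk_covering_cycle]
  exact Nat.eq_of_mul_eq_mul_left two_pos (hsum.trans (by ring))

/-- The number of closed walks of length g+2 that are not cycles, whose
traversed-edge subgraph contains a cycle of length g, and whose base vertex does not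
lie on that cycle, equals g·N_g·(c+d−4). -/
theorem lambda_g_two {V : Type*} [Fintype V] [DecidableEq V]
    (G : SimpleGraph V) [DecidableRel G.Adj]
    (U : Set V) (c d : ℕ) (hc : 2 ≤ c) (hd : 2 ≤ d)
    (hbip : ∀ ⦃u v : V⦄, G.Adj u v → (u ∈ U ↔ v ∉ U))
    (hdegU : ∀ v ∈ U, G.degree v = c)
    (hdegW : ∀ v ∉ U, G.degree v = d)
    (hcyc : ¬ G.IsAcyclic) (g : ℕ) (hg : G.girth = g)
    (N : ℕ → ℕ)
    (hN : ∀ j, {p : Σ v : V, G.Walk v v | p.2.IsCycle ∧ p.2.length = j}.ncard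
      = 2 * j * N j) :
    {p : Σ v : V, G.Walk v v | p.2.length = g + 2 ∧ ¬ p.2.IsCycle ∧
        ∃ (u : V) (q : G.Walk u u), q.IsCycle ∧ q.length = g ∧
          (∀ e ∈ q.edges, e ∈ p.2.edges) ∧ p.1 ∉ q.support}.ncard
      = g * N g * (c + d - 4) :=
  lambda_g_two_general G U c d hbip hdegU hdegW g hg N hN
end
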